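/- arXiv:1606.06849 — 4 statements merged into one kernel-verified Lean document; each statement's English description precedes it below -/
import Mathlib

section
/- There is no function v from the six observables {σ¹_x, σ¹_y, σ²_x, σ²_y, σ³_x, σ³_y} to {-1, +1} such that v(σ¹_x)·v(σ²_y)·v(σ³_y) = -1, v(σ¹_y)·v(σ²_y)·v(σ³_x) = 1, v(σ¹_y)·v(σ²_x)·v(σ³_y) = 1, and v(σ¹_x)·v(σ²_x)·v(σ³_x) = 1. -/
/-- GHZ theorem, algebraic form: no assignment of values `±1` to the six
observables `σⁱ_d` (particle `i ∈ {1,2,3}`, direction `d ∈ {x,y}`, encoded as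
`Fin 3 × Fin 2` with `0 = x`, `1 = y`) satisfies the four GHZ product constraints. -/
theorem ghz_no_hidden_values :
    ¬ ∃ v : Fin 3 × Fin 2 → ℤ,
      (∀ p, v p = 1 ∨ v p = -1) ∧
      v (0, 0) * v (1, 1) * v (2, 1) = -1 ∧
      v (0, 1) * v (1, 1) * v (2, 0) = 1 ∧
      v (0, 1) * v (1, 0) * v (2, 1) = 1 ∧
      v (0, 0) * v (1, 0) * v (2, 0) = 1 := by
  rintro ⟨v, hv, h1, h2, h3, h4⟩
  have sq : ∀ p, v p * v p = 1 := fun p => by rcases hv p with h | h <;> rw [h] <;> ring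
  have key : (v (0, 0) * v (1, 1) * v (2, 1)) * (v (0, 1) * v (1, 1) * v (2, 0)) *
      (v (0, 1) * v (1, 0) * v (2, 1)) * (v (0, 0) * v (1, 0) * v (2, 0)) = -1 := by
    rw [h1, h2, h3, h4]; ring
  rw [show (v (0, 0) * v (1, 1) * v (2, 1)) * (v (0, 1) * v (1, 1) * v (2, 0)) *
      (v (0, 1) * v (1, 0) * v (2, 1)) * (v (0, 0) * v (1, 0) * v (2, 0)) =
      (v (0, 0) * v (0, 0)) * ((v (0, 1) * v (0, 1)) * ((v (1, 0) * v (1, 0)) *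
      ((v (1, 1) * v (1, 1)) * ((v (2, 0) * v (2, 0)) * (v (2, 1) * v (2, 1)))))) from by ring,
    sq, sq, sq, sq, sq, sq] at key
  norm_num at key
end

section
/- There is no function w from {yes, no}-valued tests indexed by pairs (i, d), i ∈ {1,2,3}, d ∈ {x,y}, to Bool such that: an even number of w(1,x), w(2,y), w(3,y) are true; an odd number of w(1,y), w(2,y), w(3,x) are true; an odd number of w(1,y), w(2,x), w(3,y) are true; and an odd number of w(1,x), w(2,x), w(3,x) are true. -/
/-- GHZ theorem for yes/no tests: no assignment `w : (i,d) ↦ Bool` (particle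
`i ∈ {1,2,3}`, direction `d ∈ {x,y}` encoded as `Fin 3 × Fin 2`, `0 = x`, `1 = y`)
satisfies the four parity requirements of the GHZ state. -/
theorem ghz_no_boolean_assignment :
    ¬ ∃ w : Fin 3 × Fin 2 → Bool,
      Even ((if w (0, 0) then 1 else 0) + (if w (1, 1) then 1 else 0) +
        (if w (2, 1) then 1 else 0) : ℕ) ∧
      Odd ((if w (0, 1) then 1 else 0) + (if w (1, 1) then 1 else 0) +
        (if w (2, 0) then 1 else 0) : ℕ) ∧
      Odd ((if w (0, 1) then 1 else 0) + (if w (1, 0) then 1 else 0) +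
        (if w (2, 1) then 1 else 0) : ℕ) ∧
      Odd ((if w (0, 0) then 1 else 0) + (if w (1, 0) then 1 else 0) +
        (if w (2, 0) then 1 else 0) : ℕ) := by
  rintro ⟨w, h1, h2, h3, h4⟩
  rcases Bool.dichotomy (w (0,0)) with a|a <;>
  rcases Bool.dichotomy (w (0,1)) with b|b <;>
  rcases Bool.dichotomy (w (1,0)) with c|c <;>
  rcases Bool.dichotomy (w (1,1)) with d|d <;>
  rcases Bool.dichotomy (w (2,0)) with e|e <;>
  rcases Bool.dichotomy (w (2,1)) with f|f <;>
  simp only [a,b,c,d,e,f, if_true, Bool.false_eq_true, if_false,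
    Nat.even_iff, Nat.odd_iff] at h1 h2 h3 h4 <;> omega
end

section
/- There is no finite nonempty sequence (v_n)_{n<N} of functions v_n : {1,2} × {a,b,c} → {-1,+1} such that for all i, j ∈ {a,b,c}, the proportion f_{i,j} of indices n with v_n(1,i) = v_n(2,j) satisfies |f_{i,j} - f*_{i,j}| < 0.04, where f*_{i,j} = 3/4 if i ≠ j and f*_{i,i} = 0. -/
lemma bell_key (x y : Fin 3 → ℤ) (hx : ∀ i, x i = 1 ∨ x i = -1)
    (hy : ∀ i, y i = 1 ∨ y i = -1) :
    x 0 = y 0 ∨ x 1 = y 1 ∨ x 2 = y 2 ∨ ¬ x 0 = y 1 ∨ ¬ x 1 = y 2 ∨ ¬ x 0 = y 2 := by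
  rcases hx 0 with h0|h0 <;> rcases hx 1 with h1|h1 <;> rcases hx 2 with h2|h2 <;>
  rcases hy 0 with g0|g0 <;> rcases hy 1 with g1|g1 <;> rcases hy 2 with g2|g2 <;>
  omega

/-- Bell's theorem for sequences of hidden variables (Fact 2): there is no
nonempty finite sequence of `±1`-valued hidden variables whose frequencies
`f_{i,j}` for the events `v_n(1,i) = v_n(2,j)` are all within `0.04` of the
quantum mechanical predictions `f*_{i,j}` (`3/4` for `i ≠ j`, `0` for `i = j`).
(Particle `1` is encoded as `0 : Fin 2`, particle `2` as `1 : Fin 2`.) -/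
theorem bell_no_hidden_variable_sequence :
    ¬ ∃ (N : ℕ) (v : Fin N → Fin 2 × Fin 3 → ℤ),
      0 < N ∧ (∀ n p, v n p = 1 ∨ v n p = -1) ∧
      ∀ i j : Fin 3,
        |((Finset.univ.filter fun n => v n (0, i) = v n (1, j)).card : ℝ) / N -
          (if i = j then 0 else 3 / 4)| < 0.04 := by
  rintro ⟨N, v, hN, hpm, hf⟩
  have hN' : (0:ℝ) < N := by exact_mod_cast hN
  set S : Fin 3 → Fin 3 → Finset (Fin N) :=
    fun i j => Finset.univ.filter fun n => v n (0, i) = v n (1, j) with hS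
  have hdiag : ∀ i : Fin 3, ((S i i).card : ℝ) < 0.04 * N := by
    intro i
    have h := hf i i
    rw [if_pos rfl, sub_zero] at h
    have h2 := (abs_lt.mp h).2
    have := (div_lt_iff₀ hN').mp h2
    linarith
  have hoff : ∀ i j : Fin 3, i ≠ j → 0.71 * N < ((S i j).card : ℝ) := by
    intro i j hij
    have h := abs_lt.mp (hf i j)
    simp only [if_neg hij] at h
    have h1 := h.1
    have h2 : (3/4 : ℝ) - 0.04 < ((S i j).card : ℝ) / N := by linarith
    have := (lt_div_iff₀ hN').mp h2
    linarith
  -- covering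
  have hcov : (Finset.univ : Finset (Fin N)) ⊆
      S 0 0 ∪ S 1 1 ∪ S 2 2 ∪ (S 0 1)ᶜ ∪ (S 1 2)ᶜ ∪ (S 0 2)ᶜ := by
    intro n _
    have key := bell_key (fun i => v n (0, i)) (fun i => v n (1, i))
      (fun i => hpm n (0, i)) (fun i => hpm n (1, i))
    simp only [Finset.mem_union, Finset.mem_compl, hS, Finset.mem_filter,
      Finset.mem_univ, true_and]
    tauto
  have hcard : N ≤ (S 0 0).card + (S 1 1).card + (S 2 2).card +
      (S 0 1)ᶜ.card + (S 1 2)ᶜ.card + (S 0 2)ᶜ.card := by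
    have h1 := Finset.card_le_card hcov
    simp only [Finset.card_univ, Fintype.card_fin] at h1
    calc N ≤ _ := h1
    _ ≤ _ := by
      refine le_trans (Finset.card_union_le _ _) ?_
      gcongr ?_ + _
      refine le_trans (Finset.card_union_le _ _) ?_
      gcongr ?_ + _
      refine le_trans (Finset.card_union_le _ _) ?_
      gcongr ?_ + _
      refine le_trans (Finset.card_union_le _ _) ?_
      gcongr ?_ + _
      exact Finset.card_union_le _ _
  have hcompl : ∀ i j : Fin 3, ((S i j)ᶜ.card : ℝ) = N - (S i j).card := by
    intro i j
    rw [Finset.card_compl, Fintype.card_fin,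
      Nat.cast_sub (Finset.card_le_univ _ |>.trans (by simp))]
  have hcardR : (N:ℝ) ≤ (S 0 0).card + (S 1 1).card + (S 2 2).card +
      ((N:ℝ) - (S 0 1).card) + ((N:ℝ) - (S 1 2).card) + ((N:ℝ) - (S 0 2).card) := by
    have := hcompl 0 1
    have := hcompl 1 2
    have := hcompl 0 2
    have h := hcard
    have hcast : (N:ℝ) ≤ ((S 0 0).card : ℝ) + (S 1 1).card + (S 2 2).card +
      ((S 0 1)ᶜ.card : ℝ) + (S 1 2)ᶜ.card + (S 0 2)ᶜ.card := by exact_mod_cast h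
    linarith
  have h01 := hoff 0 1 (by decide)
  have h12 := hoff 1 2 (by decide)
  have h02 := hoff 0 2 (by decide)
  have h00 := hdiag 0
  have h11 := hdiag 1
  have h22 := hdiag 2
  linarith
end

section
/- Let A₁, A₂, A₃, A₄ ⊆ Ω with A₁ ∩ A₂ ∩ A₃ ∩ A₄ = ∅, and let (r_n)_{n∈ℕ} be a sequence in Ω. If for each i ∈ {1,2,3,4} the limit f_i = lim_{n→∞} |{m ≤ n : r_m ∈ A_i}| / n exists, then f_i ≤ 3/4 for at least one i. -/
open scoped Classical in
/-- Infinite failure of Pitowsky's law of large numbers: if `A₁ ∩ A₂ ∩ A₃ ∩ A₄ = ∅`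
and all four limiting frequencies `f_i` along an infinite sequence exist,
then `f_i ≤ 3/4` for some `i`. -/
theorem pitowsky_infinite_frequency {Ω : Type*} (A : Fin 4 → Set Ω)
    (hA : (⋂ i, A i) = ∅) (r : ℕ → Ω) (f : Fin 4 → ℝ)
    (hf : ∀ i : Fin 4, Filter.Tendsto
      (fun n => (((Finset.range n).filter fun m => r m ∈ A i).card : ℝ) / n)
      Filter.atTop (nhds (f i))) :
    ∃ i : Fin 4, f i ≤ 3 / 4 := by
  by_contra h
  push_neg at h
  -- sum of finite frequencies is ≤ 3
  have key : ∀ n : ℕ, 1 ≤ n →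
      (∑ i : Fin 4, (((Finset.range n).filter fun m => r m ∈ A i).card : ℝ) / n) ≤ 3 := by
    intro n hn
    have hcount : (∑ i : Fin 4, ((Finset.range n).filter fun m => r m ∈ A i).card) ≤ 3 * n := by
      have hswap : (∑ i : Fin 4, ((Finset.range n).filter fun m => r m ∈ A i).card)
          = ∑ m ∈ Finset.range n, (Finset.univ.filter fun i : Fin 4 => r m ∈ A i).card := by
        simp only [Finset.card_filter]
        rw [Finset.sum_comm]
      rw [hswap]
      calc ∑ m ∈ Finset.range n, (Finset.univ.filter fun i : Fin 4 => r m ∈ A i).card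
          ≤ ∑ _m ∈ Finset.range n, 3 := by
            apply Finset.sum_le_sum
            intro m _
            by_contra hc
            push_neg at hc
            have hsub : (Finset.univ.filter fun i : Fin 4 => r m ∈ A i) ⊆ Finset.univ :=
              Finset.filter_subset _ _
            have hle : (Finset.univ.filter fun i : Fin 4 => r m ∈ A i).card ≤ 4 := by
              simpa using Finset.card_le_card hsub
            have heq : (Finset.univ.filter fun i : Fin 4 => r m ∈ A i).card = 4 := by omega
            have hall : (Finset.univ.filter fun i : Fin 4 => r m ∈ A i) = Finset.univ := by
              apply Finset.eq_univ_of_card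
              simpa using heq
            have hmem : r m ∈ ⋂ i, A i := by
              rw [Set.mem_iInter]
              intro i
              have := Finset.mem_filter.mp (hall ▸ Finset.mem_univ i)
              exact this.2
            rw [hA] at hmem
            exact hmem
        _ = 3 * n := by simp [Finset.sum_const, mul_comm]
    have hn' : (0 : ℝ) < n := by exact_mod_cast hn
    rw [← Finset.sum_div, div_le_iff₀ hn']
    calc (∑ i : Fin 4, (((Finset.range n).filter fun m => r m ∈ A i).card : ℝ))
        = ((∑ i : Fin 4, ((Finset.range n).filter fun m => r m ∈ A i).card : ℕ) : ℝ) := by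
          push_cast; ring
      _ ≤ ((3 * n : ℕ) : ℝ) := by exact_mod_cast hcount
      _ = 3 * n := by push_cast; ring
  have hsum : Filter.Tendsto
      (fun n => ∑ i : Fin 4, (((Finset.range n).filter fun m => r m ∈ A i).card : ℝ) / n)
      Filter.atTop (nhds (∑ i : Fin 4, f i)) :=
    tendsto_finset_sum _ (fun i _ => hf i)
  have hle : (∑ i : Fin 4, f i) ≤ 3 :=
    le_of_tendsto hsum (Filter.eventually_atTop.2 ⟨1, key⟩)
  have hgt : (3 : ℝ) < ∑ i : Fin 4, f i := by
    calc (3 : ℝ) = ∑ _i : Fin 4, (3 / 4 : ℝ) := by norm_num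
      _ < ∑ i : Fin 4, f i := Finset.sum_lt_sum_of_nonempty Finset.univ_nonempty fun i _ => h i
  linarith
end
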